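/- Let I be a nearly complete intersection (NCI) squarefree monomial ideal in S and let F be a minimal monomial generator of I. Then there exists another minimal monomial generator of I having a variable in common with F. -/

import Mathlib

open CategoryTheory MvPolynomial

noncomputable section

/-- `dim_k Tor_i^R(M, R/mx)` : the `i`-th Betti number of the `R`-module `M`, where `R` is a
`k`-algebra and `mx` is (the analogue of) the irrelevant maximal ideal, so that `R ⧸ mx ≅ k`. -/
def bettiGen (k : Type) [Field k] (R : Type) [CommRing R] [Algebra k R]
    (mx : Ideal R) (M : ModuleCat R) (i : ℕ) : ℕ :=
  Module.finrank k
    (RestrictScalars k R (((Tor (ModuleCat R) i).obj M).obj (ModuleCat.of R (R ⧸ mx))))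

/-- The irrelevant maximal ideal `(x_1, …, x_m)` of `S = k[x_1, …, x_m]`. -/
def irrel (k : Type) [Field k] (m : ℕ) : Ideal (MvPolynomial (Fin m) k) :=
  Ideal.span (Set.range (X : Fin m → MvPolynomial (Fin m) k))

/-- `β_i(S/I) = dim_k Tor_i^S(S/I, k)` for an ideal `I ⊆ S = k[x_1, …, x_m]`. -/
def betti (k : Type) [Field k] (m : ℕ) (I : Ideal (MvPolynomial (Fin m) k)) (i : ℕ) : ℕ :=
  bettiGen k (MvPolynomial (Fin m) k) (irrel k m)
    (ModuleCat.of _ (MvPolynomial (Fin m) k ⧸ I)) i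

/-- `β(S/I) = Σ_i β_i(S/I)`, the (finite) total Betti number, valued in `ℕ∞`. -/
def bettiSum (k : Type) [Field k] (m : ℕ) (I : Ideal (MvPolynomial (Fin m) k)) : ℕ∞ :=
  ∑' i, (betti k m I i : ℕ∞)

/-- The (Krull) height of an ideal: the infimum of the heights of primes containing it. -/
def idealHeight {R : Type} [CommRing R] (I : Ideal R) : ℕ∞ :=
  ⨅ (P : PrimeSpectrum R) (_ : I ≤ P.asIdeal), Order.height P

/-- An ideal is a complete intersection iff it can be generated by a regular sequence. -/
def IsCI {R : Type} [CommRing R] (I : Ideal R) : Prop :=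
  ∃ rs : List R, RingTheory.Sequence.IsRegular R rs ∧ I = Ideal.span {r | r ∈ rs}

/-- A monomial ideal: an ideal generated by monomials. -/
def IsMonomialIdeal {k : Type} [Field k] {m : ℕ} (I : Ideal (MvPolynomial (Fin m) k)) : Prop :=
  ∃ A : Set (Fin m →₀ ℕ), I = Ideal.span ((fun a => monomial a (1 : k)) '' A)

/-- A squarefree monomial ideal: an ideal generated by squarefree monomials. -/
def IsSqFreeMonomialIdeal {k : Type} [Field k] {m : ℕ}
    (I : Ideal (MvPolynomial (Fin m) k)) : Prop :=
  ∃ A : Set (Fin m →₀ ℕ), (∀ a ∈ A, ∀ j, a j ≤ 1) ∧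
    I = Ideal.span ((fun a => monomial a (1 : k)) '' A)

/-- `a` is (the exponent vector of) a minimal monomial generator of the monomial ideal `I`:
the monomial `x^a` lies in `I` but no proper monomial divisor of it does. -/
def IsMinGen {k : Type} [Field k] {m : ℕ} (I : Ideal (MvPolynomial (Fin m) k))
    (a : Fin m →₀ ℕ) : Prop :=
  (monomial a (1 : k)) ∈ I ∧
    ∀ j, a j ≠ 0 → (monomial (a - Finsupp.single j 1) (1 : k)) ∉ I

/-- The total degree of the monomial with exponent vector `a`. -/
def expDeg {m : ℕ} (a : Fin m →₀ ℕ) : ℕ := a.sum fun _ e => e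

/-- The variable `x` lies in the support of the monomial ideal `I`, i.e. it divides some
minimal monomial generator of `I`. -/
def InSupport {k : Type} [Field k] {m : ℕ} (I : Ideal (MvPolynomial (Fin m) k))
    (x : Fin m) : Prop :=
  ∃ a, IsMinGen I a ∧ a x ≠ 0

/-- `I(x=1)` : the ideal generated by the monomials obtained from the minimal monomial
generators of `I` by substituting `1` for the variable `x`. -/
def subOne {k : Type} [Field k] {m : ℕ} (I : Ideal (MvPolynomial (Fin m) k))
    (x : Fin m) : Ideal (MvPolynomial (Fin m) k) :=
  Ideal.span ((fun a => monomial (a.erase x) (1 : k)) '' {a | IsMinGen I a})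

/-- A nearly complete intersection (NCI): a squarefree monomial ideal, generated in degree
at least two, which is not a CI, but such that `I(x=1)` is a CI for every variable `x`
in the support of `I`. -/
def IsNCI {k : Type} [Field k] {m : ℕ} (I : Ideal (MvPolynomial (Fin m) k)) : Prop :=
  IsSqFreeMonomialIdeal I ∧ (∀ a, IsMinGen I a → 2 ≤ expDeg a) ∧ ¬ IsCI I ∧
    ∀ x, InSupport I x → IsCI (subOne I x)


/-!
Suppose a minimal generator `a` of `I` shared no variable with the other minimal generators.
Being squarefree of degree at least two, `a` contains two variables `x ≠ y`. The other minimal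
generators avoid `x`, and they stay minimal in `I(x=1)` because its only new generator `a/x`
still contains `y`. Distinct minimal generators of a monomial complete intersection are
coprime, so the minimal generators of `I` are pairwise coprime. But pairwise coprime monomials
form a regular sequence, so `I` would be a complete intersection.
-/

open RingTheory.Sequence
open scoped Pointwise

section WeaklyRegular

variable {R : Type*} [CommRing R]

lemma Ideal.ofList_ofFn {n : ℕ} (r : Fin n → R) :
    Ideal.ofList (List.ofFn r) = Ideal.span (Set.range r) := by
  simp only [Ideal.ofList, List.mem_ofFn]
  rfl

lemma RingTheory.Sequence.isWeaklyRegular_append_singleton_iff {l : List R} {r : R} :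
    IsWeaklyRegular R (l ++ [r]) ↔
      IsWeaklyRegular R l ∧ ∀ f, r * f ∈ Ideal.ofList l → f ∈ Ideal.ofList l := by
  rw [isWeaklyRegular_append_iff, isWeaklyRegular_singleton_iff,
    isSMulRegular_quotient_iff_mem_of_smul_mem, Ideal.smul_eq_mul, Ideal.mul_top]
  rfl

theorem RingTheory.Sequence.IsWeaklyRegular.mem_span_of_sum_mul_eq_zero :
    ∀ {n : ℕ} {r : Fin n → R}, IsWeaklyRegular R (List.ofFn r) →
      ∀ c : Fin n → R, ∑ i, c i * r i = 0 → ∀ i, c i ∈ Ideal.span (Set.range r)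
  | 0, _, _, _, _, i => i.elim0
  | n + 1, r, h, c, hc, i => by
    rw [List.ofFn_succ', List.concat_eq_append, isWeaklyRegular_append_singleton_iff,
      Ideal.ofList_ofFn] at h
    set K' := Ideal.span (Set.range fun j : Fin n => r j.castSucc)
    have hK' : K' ≤ Ideal.span (Set.range r) :=
      Ideal.span_mono (Set.range_comp_subset_range _ r)
    rw [Fin.sum_univ_castSucc] at hc
    have hlast : c (Fin.last n) ∈ K' := by
      refine h.2 _ ?_
      rw [mul_comm, eq_neg_of_add_eq_zero_right hc]
      exact neg_mem (Ideal.sum_mem _ fun j _ => Ideal.mul_mem_left _ _ (Ideal.subset_span ⟨j, rfl⟩))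
    obtain ⟨w, hw⟩ := (Submodule.mem_span_range_iff_exists_fun R).1 hlast
    have hrel : ∑ j : Fin n, (c j.castSucc + w j * r (Fin.last n)) * r j.castSucc = 0 := by
      simp only [smul_eq_mul] at hw
      rw [← hc, ← hw, Finset.sum_mul, ← Finset.sum_add_distrib]
      exact Finset.sum_congr rfl fun j _ => by ring
    have hr : r (Fin.last n) ∈ Ideal.span (Set.range r) := Ideal.subset_span ⟨_, rfl⟩
    induction i using Fin.lastCases with
    | last => exact hK' hlast
    | cast j =>
      rw [← add_sub_cancel_right (c j.castSucc) (w j * r (Fin.last n))]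
      exact sub_mem (hK' (mem_span_of_sum_mul_eq_zero h.1 _ hrel j)) (Ideal.mul_mem_left _ _ hr)

theorem RingTheory.Sequence.IsWeaklyRegular.exists_sum_eq_and_mul_mem {n : ℕ} {r : Fin n → R}
    (hr : IsWeaklyRegular R (List.ofFn r)) {f g u v : R}
    (hf : f ∈ Ideal.span (Set.range r)) (hg : g ∈ Ideal.span (Set.range r))
    (huv : u * g = v * f) :
    ∃ p : Fin n → R, ∑ i, p i * r i = f ∧
      ∀ i, v * p i ∈ Ideal.span {u} ⊔ Ideal.span (Set.range r) := by
  obtain ⟨p, rfl⟩ := (Submodule.mem_span_range_iff_exists_fun R).1 hf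
  obtain ⟨q, rfl⟩ := (Submodule.mem_span_range_iff_exists_fun R).1 hg
  simp only [smul_eq_mul] at huv ⊢
  have hsyz := hr.mem_span_of_sum_mul_eq_zero (fun i => u * q i - v * p i) (by
    simp only [sub_mul, Finset.sum_sub_distrib, mul_assoc, ← Finset.mul_sum, huv, sub_self])
  refine ⟨p, rfl, fun i => ?_⟩
  rw [← sub_sub_cancel (u * q i) (v * p i)]
  exact sub_mem (Ideal.mem_sup_left (Ideal.mul_mem_right _ _ (Ideal.mem_span_singleton_self u)))
    (Ideal.mem_sup_right (hsyz i))

end WeaklyRegular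

namespace Finsupp

variable {ι : Type*} {b c d d' e u v w : ι →₀ ℕ}

lemma tsub_add_eq_sup (b c : ι →₀ ℕ) : b - c + c = b ⊔ c := by
  ext j; simp only [add_apply, tsub_apply, sup_apply]; omega

lemma tsub_inf_tsub_eq_zero (b c : ι →₀ ℕ) : (b - c) ⊓ (c - b) = 0 := by
  ext j; simp only [inf_apply, tsub_apply, coe_zero, Pi.zero_apply]; omega

lemma apply_eq_zero_of_inf_eq_zero (h : b ⊓ c = 0) {j : ι} (hb : b j ≠ 0) : c j = 0 := by
  have := DFunLike.congr_fun h j; simp only [inf_apply, coe_zero, Pi.zero_apply] at this; omega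

lemma exists_ne_zero_of_inf_ne_zero (h : b ⊓ c ≠ 0) : ∃ j, b j ≠ 0 ∧ c j ≠ 0 := by
  by_contra! H
  exact h (by ext j; by_cases hj : b j = 0 <;> simp [hj, H])

lemma add_le_of_inf_eq_zero (h : u ⊓ v = 0) (hu : u ≤ w) (hv : v ≤ w) : u + v ≤ w := fun j => by
  have := DFunLike.congr_fun h j; have := hu j; have := hv j
  simp only [inf_apply, coe_zero, Pi.zero_apply, add_apply] at *; omega

lemma le_of_le_add_of_inf_eq_zero (h : e ⊓ c = 0) (he : e ≤ c + w) : e ≤ w := fun j => by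
  have := DFunLike.congr_fun h j; have := he j
  simp only [inf_apply, coe_zero, Pi.zero_apply, add_apply] at *; omega

lemma le_inf_of_add_le_sup (h : b - c + (c - b) + e ≤ b ⊔ c) : e ≤ b ⊓ c := fun j => by
  have := h j; simp only [add_apply, tsub_apply, sup_apply, inf_apply] at *; omega

lemma le_of_le_sup_of_inf_eq_zero (h : d ≤ b ⊔ c) (hbd : b ⊓ d = 0) : d ≤ c := fun j => by
  have := h j; have := DFunLike.congr_fun hbd j
  simp only [sup_apply, inf_apply, coe_zero, Pi.zero_apply] at *; omega

lemma le_of_sup_eq_of_sup_eq_of_add_le (h : b ⊔ d = b ⊔ c) (h' : b ⊔ d' = b ⊔ c)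
    (hdd' : d + d' ≤ b ⊔ c) : c ≤ b := fun j => by
  have := DFunLike.congr_fun h j; have := DFunLike.congr_fun h' j; have := hdd' j
  simp only [sup_apply, add_apply] at *; omega

lemma le_tsub_single_of_lt (h : d ≤ c) {j : ι} (hj : d j < c j) : d ≤ c - single j 1 := by
  classical
  intro i; have := h i; rw [tsub_apply, single_apply]
  split_ifs with hji
  · subst hji; omega
  · omega

lemma le_tsub_single_of_add_le_sup {j : ι} (hj : b j ≠ 0) (h : b + d ≤ b ⊔ c) :
    d ≤ c - single j 1 := by
  classical
  intro i; have := h i; simp only [add_apply, sup_apply] at this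
  rw [tsub_apply, single_apply]
  split_ifs with hji
  · subst hji; omega
  · omega

lemma tsub_single_lt {j : ι} (hj : c j ≠ 0) : c - single j 1 < c :=
  lt_def.2 ⟨tsub_le_self, j, by rw [tsub_apply, single_eq_same]; omega⟩

end Finsupp

section MonomialSpan

variable {σ : Type*} (k : Type*) [CommSemiring k]

def monomialSpan (E : Set (σ →₀ ℕ)) : Ideal (MvPolynomial σ k) :=
  Ideal.span ((fun e => monomial e (1 : k)) '' E)

variable {k} {E : Set (σ →₀ ℕ)} {c d u v : σ →₀ ℕ} {p : MvPolynomial σ k}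

lemma mem_monomialSpan_iff : p ∈ monomialSpan k E ↔ ∀ w ∈ p.support, ∃ e ∈ E, e ≤ w :=
  mem_ideal_span_monomial_image

lemma monomial_mem_monomialSpan [Nontrivial k] :
    monomial c (1 : k) ∈ monomialSpan k E ↔ ∃ e ∈ E, e ≤ c := by
  classical
  simp [mem_monomialSpan_iff, support_monomial]

lemma monomial_mem_monomialSpan_of_mem (hc : c ∈ E) : monomial c (1 : k) ∈ monomialSpan k E :=
  Ideal.subset_span (Set.mem_image_of_mem _ hc)

lemma monomial_mem_of_le {K : Ideal (MvPolynomial σ k)} (hd : monomial d (1 : k) ∈ K)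
    (h : d ≤ c) : monomial c (1 : k) ∈ K := by
  rw [← tsub_add_cancel_of_le h, ← mul_one (1 : k), ← monomial_mul]
  exact K.mul_mem_left _ hd

lemma monomialSpan_insert (u : σ →₀ ℕ) (E : Set (σ →₀ ℕ)) :
    monomialSpan k (insert u E) = Ideal.span {monomial u (1 : k)} ⊔ monomialSpan k E := by
  rw [monomialSpan, Set.image_insert_eq, Ideal.span_insert]
  rfl

lemma monomialSpan_mul_monomialSpan (E F : Set (σ →₀ ℕ)) :
    monomialSpan k E * monomialSpan k F = monomialSpan k (E + F) := by
  rw [monomialSpan, monomialSpan, Ideal.span_mul_span', monomialSpan, ← Set.image2_mul,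
    Set.image2_image_left, Set.image2_image_right, ← Set.image2_add, Set.image_image2]
  simp only [monomial_mul, mul_one]

lemma Ideal.ofList_map_monomial (l : List (σ →₀ ℕ)) :
    Ideal.ofList (l.map fun c => monomial c (1 : k)) = monomialSpan k {c | c ∈ l} := by
  simp only [Ideal.ofList, List.mem_map, monomialSpan]
  rfl

lemma mem_monomialSpan_of_monomial_mul_mem (hE : ∀ e ∈ E, e ⊓ c = 0)
    (h : monomial c 1 * p ∈ monomialSpan k E) : p ∈ monomialSpan k E := by
  rw [mem_monomialSpan_iff] at h ⊢
  intro w hw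
  obtain ⟨e, he, hew⟩ := h (c + w) (by
    rw [MvPolynomial.mem_support_iff, coeff_monomial_mul, one_mul]
    exact MvPolynomial.mem_support_iff.1 hw)
  exact ⟨e, he, Finsupp.le_of_le_add_of_inf_eq_zero (hE e he) hew⟩

lemma monomial_mul_mem_monomialSpan_insert_add (huv : u ⊓ v = 0)
    (h : monomial v 1 * p ∈ monomialSpan k (insert u E)) :
    monomial v 1 * p ∈ monomialSpan k (insert (u + v) E) := by
  rw [mem_monomialSpan_iff] at h ⊢
  intro w hw
  have hvw : v ≤ w := by
    by_contra hvw
    rw [MvPolynomial.mem_support_iff, coeff_monomial_mul', if_neg hvw] at hw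
    exact hw rfl
  obtain ⟨e, rfl | he, hew⟩ := h w hw
  · exact ⟨e + v, Set.mem_insert _ _, Finsupp.add_le_of_inf_eq_zero huv hew hvw⟩
  · exact ⟨e, Set.mem_insert_of_mem _ he, hew⟩

end MonomialSpan

section MinGen

variable {k : Type} [Field k] {m : ℕ} {K : Ideal (MvPolynomial (Fin m) k)}
  {b b' c d d' : Fin m →₀ ℕ}

lemma IsMinGen.eq_of_le (hc : IsMinGen K c) (hd : monomial d (1 : k) ∈ K) (h : d ≤ c) :
    d = c := by
  by_contra hne
  obtain ⟨j, hj⟩ := (Finsupp.lt_def.1 (lt_of_le_of_ne h hne)).2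
  exact hc.2 j (by omega) (monomial_mem_of_le hd (Finsupp.le_tsub_single_of_lt h hj))

lemma exists_isMinGen_le (hc : monomial c (1 : k) ∈ K) : ∃ d, IsMinGen K d ∧ d ≤ c := by
  induction c using WellFoundedLT.induction with
  | _ c ih =>
    by_cases hmin : IsMinGen K c
    · exact ⟨c, hmin, le_rfl⟩
    · obtain ⟨j, hj, hjK⟩ : ∃ j, c j ≠ 0 ∧ monomial (c - Finsupp.single j 1) (1 : k) ∈ K := by
        simpa [IsMinGen, hc] using hmin
      obtain ⟨d, hd, hdc⟩ := ih _ (Finsupp.tsub_single_lt hj) hjK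
      exact ⟨d, hd, hdc.trans tsub_le_self⟩

lemma IsMinGen.mem_of_eq_monomialSpan {E : Set (Fin m →₀ ℕ)} (hKE : K = monomialSpan k E)
    (hc : IsMinGen K c) : c ∈ E := by
  obtain ⟨e, he, hec⟩ := monomial_mem_monomialSpan.1 (hKE ▸ hc.1)
  rwa [← hc.eq_of_le (hKE ▸ monomial_mem_monomialSpan_of_mem he) hec]

lemma IsMonomialIdeal.eq_monomialSpan_setOf_isMinGen (hK : IsMonomialIdeal K) :
    K = monomialSpan k {c | IsMinGen K c} := by
  obtain ⟨E, hKE⟩ := hK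
  change K = monomialSpan k E at hKE
  refine le_antisymm ?_ (Ideal.span_le.2 ?_)
  · conv_lhs => rw [hKE]
    refine Ideal.span_le.2 ?_
    rintro _ ⟨e, he, rfl⟩
    obtain ⟨d, hd, hde⟩ := exists_isMinGen_le (K := K) (hKE ▸ monomial_mem_monomialSpan_of_mem he)
    exact monomial_mem_monomialSpan.2 ⟨d, hd, hde⟩
  · rintro _ ⟨c, hc, rfl⟩
    exact hc.1

lemma finite_setOf_isMinGen : {c | IsMinGen K c}.Finite :=
  WellQuasiOrderedLE.finite_of_isAntichain fun _ hc _ hd hne hle => hne (hd.eq_of_le hc.1 hle)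

lemma IsMinGen.not_add_le_sup (hb' : IsMinGen K b') (hd : monomial d (1 : k) ∈ K)
    (hbb' : b ⊓ b' ≠ 0) : ¬ b + d ≤ b ⊔ b' := fun h => by
  obtain ⟨j, hbj, hb'j⟩ := Finsupp.exists_ne_zero_of_inf_ne_zero hbb'
  exact hb'.2 j hb'j (monomial_mem_of_le hd (Finsupp.le_tsub_single_of_add_le_sup hbj h))

/-- `hmin` says that `b ⊔ b'` is minimal among the lcms of `b` with the minimal generators
sharing a variable with `b`. -/
lemma IsMinGen.sup_eq_of_add_le_sup (hb : IsMinGen K b) (hb' : IsMinGen K b')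
    (hbb' : b ⊓ b' ≠ 0) (hd : IsMinGen K d) (hd' : monomial d' (1 : k) ∈ K)
    (hdd' : d + d' ≤ b ⊔ b')
    (hmin : ∀ c, IsMinGen K c → c ≠ b → b ⊓ c ≠ 0 → b ⊔ c ≤ b ⊔ b' → b ⊔ c = b ⊔ b') :
    b ⊔ d = b ⊔ b' := by
  have hdb : d ≠ b := by
    rintro rfl
    exact hb'.not_add_le_sup hd' hbb' hdd'
  have hdb' : d ≠ b' := by
    rintro rfl
    rw [sup_comm] at hdd'
    exact hb.not_add_le_sup hd' (by rwa [inf_comm]) hdd'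
  have hdL : d ≤ b ⊔ b' := le_self_add.trans hdd'
  refine hmin d hd hdb (fun hbd => hdb' ?_) (sup_le le_sup_left hdL)
  exact hb'.eq_of_le hd.1 (Finsupp.le_of_le_sup_of_inf_eq_zero hdL hbd)

end MinGen

section CompleteIntersection

theorem monomial_sup_mem_of_isWeaklyRegular {σ k : Type*} [CommRing k] {n : ℕ}
    {r : Fin n → MvPolynomial σ k} (hr : IsWeaklyRegular (MvPolynomial σ k) (List.ofFn r))
    {E : Set (σ →₀ ℕ)} (hE : Ideal.span (Set.range r) = monomialSpan k E) {b b' : σ →₀ ℕ}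
    (hb : monomial b (1 : k) ∈ monomialSpan k E) (hb' : monomial b' (1 : k) ∈ monomialSpan k E) :
    monomial (b ⊔ b') (1 : k) ∈ monomialSpan k (insert (b - b' + (b' - b)) E + E) := by
  rw [← hE] at hb hb'
  obtain ⟨p, hp, hvp⟩ := hr.exists_sum_eq_and_mul_mem hb hb'
    (u := monomial (b - b') (1 : k)) (v := monomial (b' - b) (1 : k))
    (by rw [monomial_mul, monomial_mul, Finsupp.tsub_add_eq_sup, Finsupp.tsub_add_eq_sup, sup_comm])
  have hL : monomial (b ⊔ b') (1 : k) = ∑ i, monomial (b' - b) 1 * p i * r i := by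
    rw [sup_comm, ← Finsupp.tsub_add_eq_sup, ← mul_one (1 : k), ← monomial_mul, ← hp,
      Finset.mul_sum]
    simp only [mul_one, mul_assoc]
  rw [hL, ← monomialSpan_mul_monomialSpan]
  refine Ideal.sum_mem _ fun i _ => Ideal.mul_mem_mul ?_ (hE ▸ Ideal.subset_span ⟨i, rfl⟩)
  refine monomial_mul_mem_monomialSpan_insert_add (Finsupp.tsub_inf_tsub_eq_zero b b') ?_
  rw [monomialSpan_insert, ← hE]
  exact hvp i

variable {k : Type} [Field k] {m : ℕ} {K : Ideal (MvPolynomial (Fin m) k)}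

/-- Induction on `L = b ⊔ b'`. Coefficients of a relation among a regular sequence lie in its
ideal, so the relation `x^(b-b') x^b' = x^(b'-b) x^b` puts `x^L` in `x^(b-b') x^(b'-b) K + K²`.
The first summand gives a generator dividing `gcd(x^b, x^b')`; the second gives two coprime
generators dividing `x^L`, and by minimality of `L` each of them contains every variable of
`b'` missing from `b`. -/
theorem IsCI.inf_eq_zero_of_isMinGen (hCI : IsCI K) (hK : IsMonomialIdeal K)
    {b b' : Fin m →₀ ℕ} (hb : IsMinGen K b) (hb' : IsMinGen K b') (hne : b ≠ b') :
    b ⊓ b' = 0 := by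
  obtain ⟨rs, hrs, hKrs⟩ := hCI
  have hr : IsWeaklyRegular (MvPolynomial (Fin m) k) (List.ofFn rs.get) :=
    (List.ofFn_get rs).symm ▸ hrs.toIsWeaklyRegular
  have hKr : Ideal.span (Set.range rs.get) = monomialSpan k {c | IsMinGen K c} := by
    rw [← Ideal.ofList_ofFn, List.ofFn_get, ← hK.eq_monomialSpan_setOf_isMinGen]
    exact hKrs.symm
  induction hL : b ⊔ b' using WellFoundedLT.induction generalizing b b' with
  | _ L ih =>
    subst hL
    by_contra hbb'
    have hmin : ∀ c, IsMinGen K c → c ≠ b → b ⊓ c ≠ 0 → b ⊔ c ≤ b ⊔ b' → b ⊔ c = b ⊔ b' :=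
      fun c hc hcb hbc hle => by_contra fun hlt =>
        hbc (ih _ (lt_of_le_of_ne hle hlt) hb hc hcb.symm rfl)
    obtain ⟨z, hz, hzL⟩ := monomial_mem_monomialSpan.1 (monomial_sup_mem_of_isWeaklyRegular hr hKr
      (monomial_mem_monomialSpan_of_mem hb) (monomial_mem_monomialSpan_of_mem hb'))
    obtain ⟨w, hw, d', hd', rfl⟩ := Set.mem_add.1 hz
    rcases hw with rfl | hd
    · obtain ⟨hd'b, hd'b'⟩ := le_inf_iff.1 (Finsupp.le_inf_of_add_le_sup hzL)
      exact hne ((hb.eq_of_le hd'.1 hd'b).symm.trans (hb'.eq_of_le hd'.1 hd'b'))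
    · have h := hb.sup_eq_of_add_le_sup hb' hbb' hd hd'.1 hzL hmin
      have h' := hb.sup_eq_of_add_le_sup hb' hbb' hd' hd.1 (by rwa [add_comm]) hmin
      exact hne (hb.eq_of_le hb'.1 (Finsupp.le_of_sup_eq_of_sup_eq_of_add_le h h' hzL)).symm

lemma isWeaklyRegular_map_monomial {σ k : Type*} [CommRing k] {l : List (σ →₀ ℕ)}
    (hl : l.Pairwise fun c d => c ⊓ d = 0) :
    IsWeaklyRegular (MvPolynomial σ k) (l.map fun c => monomial c (1 : k)) := by
  induction l using List.reverseRecOn with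
  | nil => exact .nil _ _
  | append_singleton l c ih =>
    rw [List.pairwise_append] at hl
    rw [List.map_append, List.map_singleton, isWeaklyRegular_append_singleton_iff,
      Ideal.ofList_map_monomial]
    exact ⟨ih hl.1, fun f => mem_monomialSpan_of_monomial_mul_mem fun e he =>
      hl.2.2 e he c (List.mem_singleton_self c)⟩

theorem IsMonomialIdeal.isCI_of_pairwise_inf_eq_zero (hK : IsMonomialIdeal K) (hKtop : K ≠ ⊤)
    (hcop : ∀ b b', IsMinGen K b → IsMinGen K b' → b ≠ b' → b ⊓ b' = 0) : IsCI K := by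
  set l := (finite_setOf_isMinGen (K := K)).toFinset.toList
  have hl : ∀ c, c ∈ l ↔ IsMinGen K c := by simp [l]
  have hKl : K = Ideal.ofList (l.map fun c => monomial c (1 : k)) := by
    rw [Ideal.ofList_map_monomial, hK.eq_monomialSpan_setOf_isMinGen]
    simp only [hl]
  refine ⟨_, ⟨isWeaklyRegular_map_monomial ?_, ?_⟩, hKl⟩
  · exact (Finset.nodup_toList _).pairwise_of_forall_ne fun b hb b' hb' =>
      hcop b b' ((hl b).1 hb) ((hl b').1 hb')
  · rw [Ideal.smul_eq_mul, Ideal.mul_top, ← hKl]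
    exact hKtop.symm

end CompleteIntersection

section NearlyCompleteIntersection

variable {k : Type} [Field k] {m : ℕ} {I : Ideal (MvPolynomial (Fin m) k)}

lemma subOne_eq_monomialSpan (I : Ideal (MvPolynomial (Fin m) k)) (x : Fin m) :
    subOne I x = monomialSpan k ((·.erase x) '' {c | IsMinGen I c}) := by
  rw [subOne, monomialSpan, Set.image_image]

lemma isMonomialIdeal_subOne (I : Ideal (MvPolynomial (Fin m) k)) (x : Fin m) :
    IsMonomialIdeal (subOne I x) :=
  ⟨_, subOne_eq_monomialSpan I x⟩

lemma IsMinGen.isMinGen_subOne {b : Fin m →₀ ℕ} {x : Fin m} (hb : IsMinGen I b) (hbx : b x = 0)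
    (h : ∀ c, IsMinGen I c → c x ≠ 0 → ¬ c.erase x ≤ b) : IsMinGen (subOne I x) b := by
  refine ⟨?_, fun j hj hjJ => ?_⟩
  · rw [subOne_eq_monomialSpan]
    exact monomial_mem_monomialSpan_of_mem ⟨b, hb, Finsupp.erase_of_notMem_support (by simpa)⟩
  · rw [subOne_eq_monomialSpan, monomial_mem_monomialSpan] at hjJ
    obtain ⟨_, ⟨c, hc, rfl⟩, hcb⟩ := hjJ
    dsimp only at hcb
    by_cases hcx : c x = 0
    · rw [Finsupp.erase_of_notMem_support (by simpa)] at hcb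
      exact hb.2 j hj (monomial_mem_of_le hc.1 hcb)
    · exact h c hc hcx (hcb.trans tsub_le_self)

lemma ne_top_of_two_le_expDeg (hdeg : ∀ a, IsMinGen I a → 2 ≤ expDeg a) : I ≠ ⊤ := by
  rintro rfl
  have := hdeg 0 ⟨Submodule.mem_top, fun j hj => absurd rfl hj⟩
  simp [expDeg] at this

lemma one_lt_card_support_of_two_le_expDeg {a : Fin m →₀ ℕ} (ha : ∀ j, a j ≤ 1)
    (hdeg : 2 ≤ expDeg a) : 1 < a.support.card := by
  have : expDeg a ≤ a.support.card := by
    rw [expDeg, Finsupp.sum, Finset.card_eq_sum_ones]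
    exact Finset.sum_le_sum fun j _ => ha j
  omega

lemma isMinGen_subOne_of_forall_inf_eq_zero {a b : Fin m →₀ ℕ} {x y : Fin m}
    (hdisj : ∀ c, IsMinGen I c → c ≠ a → a ⊓ c = 0) (hx : a x ≠ 0) (hy : a y ≠ 0)
    (hxy : x ≠ y) (hb : IsMinGen I b) (hba : b ≠ a) : IsMinGen (subOne I x) b := by
  have hby := Finsupp.apply_eq_zero_of_inf_eq_zero (hdisj b hb hba) hy
  refine hb.isMinGen_subOne (Finsupp.apply_eq_zero_of_inf_eq_zero (hdisj b hb hba) hx)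
    fun c hc hcx hcb => ?_
  obtain rfl : c = a := by_contra fun hca =>
    hcx (Finsupp.apply_eq_zero_of_inf_eq_zero (hdisj c hc hca) hx)
  have hcby := hcb y
  rw [Finsupp.erase_ne hxy.symm, hby] at hcby
  exact hy (Nat.le_zero.1 hcby)

end NearlyCompleteIntersection

/-- **Lemma.** If `I` is a nearly complete intersection and `F` is a minimal monomial
generator of `I`, then `F` has a variable in common with some other minimal generator. -/
theorem nci_min_gen_shares_variable (k : Type) [Field k] (m : ℕ)
    (I : Ideal (MvPolynomial (Fin m) k)) (hI : IsNCI I)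
    (a : Fin m →₀ ℕ) (ha : IsMinGen I a) :
    ∃ b, IsMinGen I b ∧ b ≠ a ∧ (a.support ∩ b.support).Nonempty := by
  obtain ⟨⟨A, hsqA, hIA⟩, hdeg, hnotCI, hsubCI⟩ := hI
  by_contra! hdisj
  replace hdisj : ∀ b, IsMinGen I b → b ≠ a → a ⊓ b = 0 := fun b hb hba =>
    Finsupp.support_eq_empty.1 <| by rw [Finsupp.support_inf]; exact hdisj b hb hba
  obtain ⟨x, hx, y, hy, hxy⟩ := Finset.one_lt_card.1 <| one_lt_card_support_of_two_le_expDeg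
    (hsqA a (ha.mem_of_eq_monomialSpan hIA)) (hdeg a ha)
  rw [Finsupp.mem_support_iff] at hx hy
  have hsub := fun b => isMinGen_subOne_of_forall_inf_eq_zero (b := b) hdisj hx hy hxy
  refine hnotCI (IsMonomialIdeal.isCI_of_pairwise_inf_eq_zero ⟨A, hIA⟩
    (ne_top_of_two_le_expDeg hdeg) fun b b' hb hb' hne => ?_)
  rcases eq_or_ne b a with rfl | hba
  · exact hdisj b' hb' (Ne.symm hne)
  rcases eq_or_ne b' a with rfl | hb'a
  · rw [inf_comm]; exact hdisj b hb hba
  exact (hsubCI x ⟨a, ha, hx⟩).inf_eq_zero_of_isMinGen (isMonomialIdeal_subOne I x)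
    (hsub b hb hba) (hsub b' hb' hb'a) hne

end
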